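/- Let G be a 3-connected graph, and let (A,B) and (C,D) be two mixed 3-separations of G that cross so that two opposite corner-separators have size three. Then either all four links have the same size ℓ for some ℓ ∈ {0,1}, or else two adjacent links have size i and the other two links have size 3−i for some i ∈ {1,2}. -/

import Mathlib

namespace Paper

open SimpleGraph

variable {V : Type*} [Fintype V] [DecidableEq V]

/-- A graph is `k`-connected if it has more than `k` vertices and deleting
fewer than `k` vertices never disconnects it. -/
def KConnected {W : Type*} (k : ℕ) (H : SimpleGraph W) : Prop :=
  k < Nat.card W ∧ ∀ S : Set W, S.ncard < k → (H.induce Sᶜ).Connected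

/-- A mixed-separation of `G`: `A ∪ B = V(G)` and both `A \ B` and `B \ A` are nonempty. -/
def MixedSep (G : SimpleGraph V) (A B : Set V) : Prop :=
  A ∪ B = Set.univ ∧ (A \ B).Nonempty ∧ (B \ A).Nonempty

/-- The edges of the separator of `(A,B)`: the edges between `A \ B` and `B \ A`. -/
def sepEdges (G : SimpleGraph V) (A B : Set V) : Set (Sym2 V) :=
  {e | e ∈ G.edgeSet ∧ ∃ x ∈ A \ B, ∃ y ∈ B \ A, e = s(x, y)}

/-- The separator of `(A,B)`: the vertices of `A ∩ B` together with the
edges between `A \ B` and `B \ A`, viewed as a set in `V ⊕ Sym2 V`. -/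
def sepSet (G : SimpleGraph V) (A B : Set V) : Set (V ⊕ Sym2 V) :=
  (Sum.inl '' (A ∩ B)) ∪ (Sum.inr '' sepEdges G A B)

/-- The order of a mixed-separation: the size of its separator. -/
noncomputable def sepOrder (G : SimpleGraph V) (A B : Set V) : ℕ :=
  (sepSet G A B).ncard

/-- A mixed `k`-separation. -/
def MixedKSep (G : SimpleGraph V) (k : ℕ) (A B : Set V) : Prop :=
  MixedSep G A B ∧ sepOrder G A B = k

/-- A tri-separation: a mixed 3-separation such that every vertex of `A ∩ B`
has at least two neighbours in both `G[A]` and `G[B]`. -/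
def TriSep (G : SimpleGraph V) (A B : Set V) : Prop :=
  MixedKSep G 3 A B ∧
    ∀ v ∈ A ∩ B, 2 ≤ (G.neighborSet v ∩ A).ncard ∧ 2 ≤ (G.neighborSet v ∩ B).ncard

/-- Two mixed-separations are nested if, after possibly swapping the names of
the sides of either one, `A ⊆ C` and `B ⊇ D`. -/
def Nested (A B C D : Set V) : Prop :=
  (A ⊆ C ∧ D ⊆ B) ∨ (A ⊆ D ∧ C ⊆ B) ∨ (B ⊆ C ∧ D ⊆ A) ∨ (B ⊆ D ∧ C ⊆ A)

/-- The induced subgraph `G[A]` contains a cycle. -/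
def HasCycleIn (G : SimpleGraph V) (A : Set V) : Prop :=
  ∃ (u : V) (p : G.Walk u u), p.IsCycle ∧ ∀ x ∈ p.support, x ∈ A

/-- A mixed 3-separation is nontrivial if both sides induce a subgraph containing a cycle. -/
def NontrivialSep (G : SimpleGraph V) (A B : Set V) : Prop :=
  HasCycleIn G A ∧ HasCycleIn G B

/-- A mixed-separation is strong if every vertex in its separator has degree at least 4. -/
def StrongSep (G : SimpleGraph V) (A B : Set V) : Prop :=
  ∀ v ∈ A ∩ B, 4 ≤ (G.neighborSet v).ncard

/-- A tri-separation is totally nested if it is nested with every tri-separation of `G`. -/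
def TotallyNested (G : SimpleGraph V) (A B : Set V) : Prop :=
  ∀ C D : Set V, TriSep G C D → Nested A B C D

/-- A trivial tri-separation: its sides are the sides `{v}` and `V \ {v}` of an
atomic cut at a degree-3 vertex `v`. -/
def TrivialSep (G : SimpleGraph V) (A B : Set V) : Prop :=
  ∃ v : V, (G.neighborSet v).ncard = 3 ∧
    ((A = {v} ∧ B = {v}ᶜ) ∨ (B = {v} ∧ A = {v}ᶜ))

/-- Diagonal edges of the crossing-diagram of `(A,B)` and `(C,D)`:
edges whose endvertices lie in opposite corners. -/
def diagEdges (G : SimpleGraph V) (A B C D : Set V) : Set (Sym2 V) :=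
  {e | e ∈ G.edgeSet ∧ ∃ x y, e = s(x, y) ∧
    ((x ∈ (A \ B) ∩ (C \ D) ∧ y ∈ (B \ A) ∩ (D \ C)) ∨
     (x ∈ (A \ B) ∩ (D \ C) ∧ y ∈ (B \ A) ∩ (C \ D)))}

/-- The centre of the crossing-diagram: `A ∩ B ∩ C ∩ D` together with the diagonal edges. -/
def centre (G : SimpleGraph V) (A B C D : Set V) : Set (V ⊕ Sym2 V) :=
  (Sum.inl '' (A ∩ B ∩ C ∩ D)) ∪ (Sum.inr '' diagEdges G A B C D)

/-- The link for the side `C` in the crossing-diagram of `(A,B)` and `(C,D)`: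
the vertices `(A ∩ B) \ D` together with the non-diagonal edges of the separator
of `(A,B)` having an endvertex in a corner for `C`. -/
def link (G : SimpleGraph V) (A B C D : Set V) : Set (V ⊕ Sym2 V) :=
  (Sum.inl '' ((A ∩ B) \ D)) ∪
    (Sum.inr '' {e | e ∈ sepEdges G A B ∧ e ∉ diagEdges G A B C D ∧ ∃ x ∈ e, x ∈ C \ D})

/-- The corner-separator at the corner for `{A,C}`: the union of the links for `A`
and for `C` together with the centre, minus the diagonal edges without an
endvertex in the corner for `{A,C}`. -/
def cornerSep (G : SimpleGraph V) (A B C D : Set V) : Set (V ⊕ Sym2 V) :=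
  link G C D A B ∪ link G A B C D ∪ (Sum.inl '' (A ∩ B ∩ C ∩ D)) ∪
    (Sum.inr '' {e | e ∈ diagEdges G A B C D ∧ ∃ x ∈ e, x ∈ (A \ B) ∩ (C \ D)})

/-- Jumping edges: edges joining vertices of two opposite links. -/
def jumpEdges (G : SimpleGraph V) (A B C D : Set V) : Set (Sym2 V) :=
  {e | e ∈ G.edgeSet ∧ ∃ x y, e = s(x, y) ∧
    ((x ∈ (A ∩ B) \ D ∧ y ∈ (A ∩ B) \ C) ∨ (x ∈ (C ∩ D) \ B ∧ y ∈ (C ∩ D) \ A))}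

/-- A 2-separation: a separation of order two with no edges in its separator. -/
def TwoSep (G : SimpleGraph V) (A B : Set V) : Prop :=
  A ∪ B = Set.univ ∧ (A \ B).Nonempty ∧ (B \ A).Nonempty ∧
    (A ∩ B).ncard = 2 ∧ sepEdges G A B = ∅

/-- `K` is (the vertex set of) a connected component of `G - S`. -/
def IsCompOf (G : SimpleGraph V) (S K : Set V) : Prop :=
  ∃ c : (G.induce Sᶜ).ConnectedComponent, K = Subtype.val '' c.supp

end Paper

/-! Let `L_A, L_B, L_C, L_D` be the links for `A, B, C, D`, of sizes `a, b, c, d`, and `T` the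
part of the centre shared by the corner-separators at `{A,C}` and `{B,D}` (the vertices of
`A ∩ B ∩ C ∩ D` and the diagonal edges between these two corners). The links and `T` are pairwise
disjoint, the two corner-separators are `L_A ∪ L_C ∪ T` and `L_B ∪ L_D ∪ T`, and `L_C ∪ L_D ∪ T`,
`L_A ∪ L_B ∪ T` lie in the separators of `(A,B)` and `(C,D)`. As all four sets have size three,
`a + c = b + d = c + d = a + b`, and both separators consist of exactly these pieces; hence
`a = d` and `b = c`. If `a = 0 < b`, then the corner for `{A,D}` can reach the rest of `G` only
through the at most two vertices of `A ∩ B ∩ C ∩ D`, so 3-connectivity empties it and the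
separations are nested; symmetrically if `b = 0 < a`. So `a` and `b` vanish together, which
leaves exactly the listed patterns. -/

namespace Paper

open SimpleGraph

variable {V : Type*}

/-- The part of the corner-separator at the corner for `{A,C}` that lies in the centre. -/
def cornerCentre (G : SimpleGraph V) (A B C D : Set V) : Set (V ⊕ Sym2 V) :=
  Sum.inl '' (A ∩ B ∩ C ∩ D) ∪
    Sum.inr '' {e | e ∈ diagEdges G A B C D ∧ ∃ x ∈ e, x ∈ (A \ B) ∩ (C \ D)}

section Sum

variable {α β : Type*} {s : Set α} {t : Set β}

@[simp] lemma inl_mem_image_inl_union_image_inr {a : α} :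
    (Sum.inl a : α ⊕ β) ∈ Sum.inl '' s ∪ Sum.inr '' t ↔ a ∈ s := by
  simp

@[simp] lemma inr_mem_image_inl_union_image_inr {b : β} :
    (Sum.inr b : α ⊕ β) ∈ Sum.inl '' s ∪ Sum.inr '' t ↔ b ∈ t := by
  simp

end Sum

section Symmetry

variable (G : SimpleGraph V) (A B C D : Set V)

lemma sepEdges_comm : sepEdges G B A = sepEdges G A B := by
  ext e
  constructor <;> rintro ⟨he, x, hx, y, hy, rfl⟩ <;> exact ⟨he, y, hy, x, hx, Sym2.eq_swap⟩

lemma sepSet_comm : sepSet G B A = sepSet G A B := by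
  rw [sepSet, sepSet, sepEdges_comm, Set.inter_comm]

lemma diagEdges_comm_right : diagEdges G A B D C = diagEdges G A B C D := by
  ext e
  simp only [diagEdges, Set.mem_ofPred_eq]
  constructor <;> rintro ⟨he, x, y, rfl, h⟩ <;> exact ⟨he, x, y, rfl, h.symm⟩

lemma diagEdges_comm_left : diagEdges G B A C D = diagEdges G A B C D := by
  ext e
  simp only [diagEdges, Set.mem_ofPred_eq]
  constructor <;> rintro ⟨he, x, y, rfl, h⟩ <;> exact ⟨he, y, x, Sym2.eq_swap, by tauto⟩

lemma diagEdges_comm : diagEdges G C D A B = diagEdges G A B C D := by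
  ext e
  simp only [diagEdges, Set.mem_ofPred_eq]
  constructor <;> rintro ⟨he, x, y, rfl, h | h⟩
  all_goals first
    | exact ⟨he, x, y, rfl, by simp only [Set.mem_inter_iff] at h ⊢; tauto⟩
    | exact ⟨he, y, x, Sym2.eq_swap, by simp only [Set.mem_inter_iff] at h ⊢; tauto⟩

lemma link_comm_left : link G B A C D = link G A B C D := by
  rw [link, link, sepEdges_comm, diagEdges_comm_left, Set.inter_comm B A]

lemma centre_comm_right : centre G A B D C = centre G A B C D := by
  rw [centre, centre, diagEdges_comm_right, Set.inter_right_comm (A ∩ B)]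

lemma inter_inter_inter_comm_pairs : C ∩ D ∩ A ∩ B = A ∩ B ∩ C ∩ D := by
  ext
  simp only [Set.mem_inter_iff]
  tauto

lemma centre_comm : centre G C D A B = centre G A B C D := by
  rw [centre, centre, diagEdges_comm, inter_inter_inter_comm_pairs]

lemma cornerCentre_comm : cornerCentre G C D A B = cornerCentre G A B C D := by
  rw [cornerCentre, cornerCentre, diagEdges_comm, inter_inter_inter_comm_pairs,
    Set.inter_comm (C \ D)]

lemma inter_inter_inter_comm_each : B ∩ A ∩ D ∩ C = A ∩ B ∩ C ∩ D := by
  ext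
  simp only [Set.mem_inter_iff]
  tauto

lemma cornerCentre_opposite : cornerCentre G B A D C = cornerCentre G A B C D := by
  rw [cornerCentre, cornerCentre, inter_inter_inter_comm_each, diagEdges_comm_left,
    diagEdges_comm_right]
  congr 2
  ext e
  simp only [diagEdges, Set.mem_ofPred_eq]
  constructor <;> rintro ⟨⟨he, x, y, rfl, h⟩, w, hw, hwc⟩ <;> rw [Sym2.mem_iff] at hw
  all_goals refine ⟨⟨he, x, y, rfl, h⟩, ?_⟩
  all_goals simp only [Set.mem_inter_iff, Set.mem_sdiff] at h hwc ⊢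
  all_goals rcases hw with rfl | rfl
  all_goals first
    | exact ⟨_, Sym2.mem_mk_left _ _, by tauto⟩
    | exact ⟨_, Sym2.mem_mk_right _ _, by tauto⟩

end Symmetry

section Membership

variable {G : SimpleGraph V} {A B C D : Set V} {v : V} {e : Sym2 V}

@[simp] lemma inl_mem_sepSet : Sum.inl v ∈ sepSet G A B ↔ v ∈ A ∩ B :=
  inl_mem_image_inl_union_image_inr

@[simp] lemma inr_mem_sepSet : Sum.inr e ∈ sepSet G A B ↔ e ∈ sepEdges G A B :=
  inr_mem_image_inl_union_image_inr

@[simp] lemma inl_mem_link : Sum.inl v ∈ link G A B C D ↔ v ∈ (A ∩ B) \ D :=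
  inl_mem_image_inl_union_image_inr

lemma inr_mem_link :
    Sum.inr e ∈ link G A B C D ↔
      e ∈ sepEdges G A B ∧ e ∉ diagEdges G A B C D ∧ ∃ x ∈ e, x ∈ C \ D :=
  inr_mem_image_inl_union_image_inr

@[simp] lemma inl_mem_cornerCentre : Sum.inl v ∈ cornerCentre G A B C D ↔ v ∈ A ∩ B ∩ C ∩ D :=
  inl_mem_image_inl_union_image_inr

lemma inr_mem_cornerCentre :
    Sum.inr e ∈ cornerCentre G A B C D ↔
      e ∈ diagEdges G A B C D ∧ ∃ x ∈ e, x ∈ (A \ B) ∩ (C \ D) :=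
  inr_mem_image_inl_union_image_inr

lemma mem_diagEdges_of_mem_sepEdges (h₁ : e ∈ sepEdges G A B) (h₂ : e ∈ sepEdges G C D) :
    e ∈ diagEdges G A B C D := by
  obtain ⟨he, x, hx, y, hy, rfl⟩ := h₁
  obtain ⟨-, u, hu, w, hw, huw⟩ := h₂
  rcases Sym2.eq_iff.mp huw with ⟨rfl, rfl⟩ | ⟨rfl, rfl⟩
  · exact ⟨he, x, y, rfl, Or.inl ⟨⟨hx, hu⟩, hy, hw⟩⟩
  · exact ⟨he, x, y, rfl, Or.inr ⟨⟨hx, hw⟩, hy, hu⟩⟩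

lemma not_mem_sdiff_of_inr_mem_link (h : Sum.inr e ∈ link G A B C D) {w : V} (hw : w ∈ e) :
    w ∉ D \ C := by
  obtain ⟨⟨he, x, hx, y, hy, rfl⟩, hnd, u, hu, huC⟩ := inr_mem_link.mp h
  intro hwD
  rcases Sym2.mem_iff.mp hu with rfl | rfl <;> rcases Sym2.mem_iff.mp hw with rfl | rfl
  · exact huC.2 hwD.1
  · exact hnd ⟨he, u, w, rfl, Or.inl ⟨⟨hx, huC⟩, hy, hwD⟩⟩
  · exact hnd ⟨he, w, u, rfl, Or.inr ⟨⟨hx, hwD⟩, hy, huC⟩⟩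
  · exact huC.2 hwD.1

lemma mem_corner_of_inr_mem_cornerCentre (h : Sum.inr e ∈ cornerCentre G A B C D) {w : V}
    (hw : w ∈ e) : w ∈ (A \ B) ∩ (C \ D) ∨ w ∈ (B \ A) ∩ (D \ C) := by
  obtain ⟨⟨-, x, y, rfl, hxy⟩, u, hu, huc⟩ := inr_mem_cornerCentre.mp h
  rcases Sym2.mem_iff.mp hw with rfl | rfl <;> rcases Sym2.mem_iff.mp hu with rfl | rfl <;>
    simp only [Set.mem_inter_iff, Set.mem_sdiff] at hxy huc ⊢ <;> tauto

lemma inr_mem_sepSet_of_mem_cornerCentre (h : Sum.inr e ∈ cornerCentre G A B C D) :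
    e ∈ sepEdges G A B := by
  obtain ⟨⟨he, x, y, rfl, ⟨hx, hy⟩ | ⟨hx, hy⟩⟩, -⟩ := inr_mem_cornerCentre.mp h
  exacts [⟨he, x, hx.1, y, hy.1, rfl⟩, ⟨he, x, hx.1, y, hy.1, rfl⟩]

end Membership

section Counting

variable (G : SimpleGraph V) (A B C D : Set V)

lemma disjoint_link_link (hCD : C ∪ D = Set.univ) :
    Disjoint (link G A B C D) (link G A B D C) := by
  rw [Set.disjoint_left]
  rintro (v | e) h₁ h₂
  · simp only [inl_mem_link] at h₁ h₂
    have := hCD ▸ Set.mem_univ v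
    exact this.elim h₂.2 h₁.2
  · obtain ⟨-, -, u, hu, huD⟩ := inr_mem_link.mp h₂
    exact not_mem_sdiff_of_inr_mem_link h₁ hu huD

lemma disjoint_link_link_cross (X Y : Set V) : Disjoint (link G A B C D) (link G C D X Y) := by
  rw [Set.disjoint_left]
  rintro (v | e) h₁ h₂
  · simp only [inl_mem_link] at h₁ h₂
    exact h₁.2 h₂.1.2
  · obtain ⟨he₁, hnd, -⟩ := inr_mem_link.mp h₁
    exact hnd (mem_diagEdges_of_mem_sepEdges he₁ (inr_mem_link.mp h₂).1)

lemma disjoint_link_centre : Disjoint (link G A B C D) (centre G A B C D) := by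
  rw [Set.disjoint_left]
  rintro (v | e) h₁ h₂
  · simp only [inl_mem_link, centre, inl_mem_image_inl_union_image_inr] at h₁ h₂
    exact h₁.2 h₂.2
  · simp only [centre, inr_mem_image_inl_union_image_inr] at h₂
    exact (inr_mem_link.mp h₁).2.1 h₂

lemma cornerCentre_subset_centre : cornerCentre G A B C D ⊆ centre G A B C D :=
  Set.union_subset_union_right _ (Set.image_mono fun _ he => he.1)

lemma disjoint_link_cornerCentre_of_centre_eq {X Y Z W : Set V}
    (h : centre G X Y Z W = centre G A B C D) :
    Disjoint (link G X Y Z W) (cornerCentre G A B C D) :=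
  (disjoint_link_centre G X Y Z W).mono_right (h ▸ cornerCentre_subset_centre G A B C D)

lemma cornerSep_eq :
    cornerSep G A B C D = link G C D A B ∪ link G A B C D ∪ cornerCentre G A B C D :=
  Set.union_assoc _ _ _

lemma ncard_cornerSep [Finite V] : (cornerSep G A B C D).ncard =
    (link G C D A B).ncard + (link G A B C D).ncard + (cornerCentre G A B C D).ncard := by
  rw [cornerSep_eq, Set.ncard_union_eq (Disjoint.union_left
      (disjoint_link_cornerCentre_of_centre_eq G A B C D (centre_comm G A B C D))
      (disjoint_link_cornerCentre_of_centre_eq G A B C D rfl)),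
    Set.ncard_union_eq (disjoint_link_link_cross G C D A B C D)]

lemma links_union_cornerCentre_subset_sepSet :
    link G A B C D ∪ link G A B D C ∪ cornerCentre G A B C D ⊆ sepSet G A B := by
  refine Set.union_subset (Set.union_subset ?_ ?_) ?_
  iterate 2
    rintro (v | e) h
    · simpa using (inl_mem_link.mp h).1
    · simpa using (inr_mem_link.mp h).1
  rintro (v | e) h
  · simpa using (inl_mem_cornerCentre.mp h).1.1
  · simpa using inr_mem_sepSet_of_mem_cornerCentre h

lemma ncard_links_union_cornerCentre [Finite V] (hCD : C ∪ D = Set.univ) :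
    (link G A B C D ∪ link G A B D C ∪ cornerCentre G A B C D).ncard =
      (link G A B C D).ncard + (link G A B D C).ncard + (cornerCentre G A B C D).ncard := by
  rw [Set.ncard_union_eq (Disjoint.union_left
      (disjoint_link_cornerCentre_of_centre_eq G A B C D rfl)
      (disjoint_link_cornerCentre_of_centre_eq G A B C D (centre_comm_right G A B C D))),
    Set.ncard_union_eq (disjoint_link_link G A B C D hCD)]

lemma sepSet_eq_links_union_cornerCentre [Finite V] (hAB : A ∪ B = Set.univ)
    (hCD : C ∪ D = Set.univ) (hABord : sepOrder G A B = 3) (hCDord : sepOrder G C D = 3)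
    (h₁ : (cornerSep G A B C D).ncard = 3) (h₂ : (cornerSep G B A D C).ncard = 3) :
    sepSet G A B = link G A B C D ∪ link G A B D C ∪ cornerCentre G A B C D ∧
      sepSet G C D = link G C D A B ∪ link G C D B A ∪ cornerCentre G A B C D := by
  have sAB := links_union_cornerCentre_subset_sepSet G A B C D
  have sCD := links_union_cornerCentre_subset_sepSet G C D A B
  have nAB := ncard_links_union_cornerCentre G A B C D hCD
  have nCD := ncard_links_union_cornerCentre G C D A B hAB
  have n₁ := ncard_cornerSep G A B C D
  have n₂ := ncard_cornerSep G B A D C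
  rw [cornerCentre_comm] at sCD nCD
  rw [link_comm_left, link_comm_left G A B, cornerCentre_opposite] at n₂
  have leAB := Set.ncard_le_ncard sAB
  have leCD := Set.ncard_le_ncard sCD
  rw [sepOrder] at hABord hCDord
  exact ⟨(Set.eq_of_subset_of_ncard_le sAB (by omega)).symm,
    (Set.eq_of_subset_of_ncard_le sCD (by omega)).symm⟩

lemma ncard_le_ncard_cornerCentre [Finite V] :
    (A ∩ B ∩ C ∩ D).ncard ≤ (cornerCentre G A B C D).ncard := by
  rw [← Set.ncard_image_of_injective _ Sum.inl_injective]
  exact Set.ncard_le_ncard Set.subset_union_left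

end Counting

section Nesting

variable {G : SimpleGraph V} {A B C D : Set V}

lemma eq_empty_of_forall_adj_mem {W : Type*} {H : SimpleGraph W} {S K : Set W}
    (hconn : (H.induce Sᶜ).Connected) (hKS : Disjoint K S)
    (hK : ∀ x ∈ K, ∀ y, H.Adj x y → y ∈ K ∪ S) {z : W} (hz : z ∉ K ∪ S) : K = ∅ := by
  by_contra hne
  obtain ⟨x, hx⟩ := Set.nonempty_iff_ne_empty.mpr hne
  obtain ⟨p⟩ := hconn.preconnected ⟨x, hKS.notMem_of_mem_left hx⟩
    ⟨z, fun h => hz (Or.inr h)⟩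
  obtain ⟨d, -, hd₁, hd₂⟩ := p.exists_boundary_dart {u | u.1 ∈ K} hx fun h => hz (Or.inl h)
  exact (hK _ hd₁ _ d.adj).elim hd₂ d.snd.2

lemma inter_subset_of_sepSet_subset (hCD : C ∪ D = Set.univ)
    (h : sepSet G A B ⊆ link G A B C D ∪ centre G A B C D) : A ∩ B ⊆ C := by
  intro y hy
  by_contra hyC
  have hyD : y ∈ D := ((hCD ▸ Set.mem_univ y) : y ∈ C ∪ D).resolve_left hyC
  rcases h (inl_mem_sepSet.mpr hy) with h | h
  · exact (inl_mem_link.mp h).2 hyD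
  · exact hyC (inl_mem_image_inl_union_image_inr.mp h).1.2

lemma mem_corner_or_centre_of_adj (hAB : A ∪ B = Set.univ) (hCD : C ∪ D = Set.univ)
    (hABC : A ∩ B ⊆ C) (hCDB : C ∩ D ⊆ B)
    (hABsep : sepSet G A B ⊆ link G A B C D ∪ cornerCentre G A B C D)
    (hCDsep : sepSet G C D ⊆ link G C D B A ∪ cornerCentre G A B C D)
    {x y : V} (hx : x ∈ (A \ B) ∩ (D \ C)) (hxy : G.Adj x y) :
    y ∈ (A \ B) ∩ (D \ C) ∪ A ∩ B ∩ C ∩ D := by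
  have hT : Sum.inr s(x, y) ∉ cornerCentre G A B C D := fun h => by
    rcases mem_corner_of_inr_mem_cornerCentre h (Sym2.mem_mk_left x y) with h | h
    exacts [hx.2.2 h.2.1, hx.1.2 h.1.1]
  have hyA : y ∈ A := by
    by_contra hyA
    have hyB : y ∈ B := ((hAB ▸ Set.mem_univ y) : y ∈ A ∪ B).resolve_left hyA
    rcases hABsep (inr_mem_sepSet.mpr ⟨hxy, x, hx.1, y, ⟨hyB, hyA⟩, rfl⟩) with h | h
    exacts [not_mem_sdiff_of_inr_mem_link h (Sym2.mem_mk_left x y) hx.2, hT h]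
  have hyD : y ∈ D := by
    by_contra hyD
    have hyC : y ∈ C := ((hCD ▸ Set.mem_univ y) : y ∈ C ∪ D).resolve_right hyD
    rcases hCDsep (inr_mem_sepSet.mpr ⟨hxy, y, ⟨hyC, hyD⟩, x, hx.2, Sym2.eq_swap⟩) with h | h
    exacts [not_mem_sdiff_of_inr_mem_link h (Sym2.mem_mk_left x y) hx.1, hT h]
  by_cases hyB : y ∈ B
  · exact Or.inr ⟨⟨⟨hyA, hyB⟩, hABC ⟨hyA, hyB⟩⟩, hyD⟩
  · exact Or.inl ⟨⟨hyA, hyB⟩, hyD, fun hyC => hyB (hCDB ⟨hyC, hyD⟩)⟩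

lemma subset_and_subset_of_sepSet_subset (hAB : A ∪ B = Set.univ) (hCD : C ∪ D = Set.univ)
    (hBA : (B \ A).Nonempty) (hconn : (G.induce (A ∩ B ∩ C ∩ D)ᶜ).Connected)
    (hABsep : sepSet G A B ⊆ link G A B C D ∪ cornerCentre G A B C D)
    (hCDsep : sepSet G C D ⊆ link G C D B A ∪ cornerCentre G A B C D) :
    A ⊆ C ∧ D ⊆ B := by
  have hTCD : cornerCentre G A B C D ⊆ centre G C D B A := by
    rw [centre_comm_right, centre_comm]
    exact cornerCentre_subset_centre G A B C D
  have hABC : A ∩ B ⊆ C := inter_subset_of_sepSet_subset hCD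
    (hABsep.trans (Set.union_subset_union_right _ (cornerCentre_subset_centre G A B C D)))
  have hCDB : C ∩ D ⊆ B := inter_subset_of_sepSet_subset (Set.union_comm A B ▸ hAB)
    (hCDsep.trans (Set.union_subset_union_right _ hTCD))
  obtain ⟨z, hzB, hzA⟩ := hBA
  have hcorner : (A \ B) ∩ (D \ C) = ∅ :=
    eq_empty_of_forall_adj_mem hconn
      (Set.disjoint_left.mpr fun x hx hxZ => hx.1.2 hxZ.1.1.2)
      (fun x hx y hxy => mem_corner_or_centre_of_adj hAB hCD hABC hCDB hABsep hCDsep hx hxy)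
      (z := z) (by rintro (h | h); exacts [hzA h.1.1, hzA h.1.1.1])
  have hcorner' := Set.eq_empty_iff_forall_notMem.mp hcorner
  constructor
  · intro x hxA
    by_contra hxC
    have hxD : x ∈ D := ((hCD ▸ Set.mem_univ x) : x ∈ C ∪ D).resolve_left hxC
    by_cases hxB : x ∈ B
    exacts [hxC (hABC ⟨hxA, hxB⟩), hcorner' x ⟨⟨hxA, hxB⟩, hxD, hxC⟩]
  · intro x hxD
    by_contra hxB
    have hxA : x ∈ A := ((hAB ▸ Set.mem_univ x) : x ∈ A ∪ B).resolve_right hxB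
    by_cases hxC : x ∈ C
    exacts [hxB (hCDB ⟨hxC, hxD⟩), hcorner' x ⟨⟨hxA, hxB⟩, hxD, hxC⟩]

lemma mixedKSep_comm {k : ℕ} (h : MixedKSep G k A B) : MixedKSep G k B A :=
  ⟨⟨Set.union_comm A B ▸ h.1.1, h.1.2.2, h.1.2.1⟩, by rw [sepOrder, sepSet_comm]; exact h.2⟩

lemma nested_comm_right : Nested A B D C ↔ Nested A B C D := by
  unfold Nested
  tauto

lemma link_ncard_of_cornerSep_ncard_eq_three [Finite V] (h3 : KConnected 3 G)
    (hAB : MixedKSep G 3 A B) (hCD : MixedKSep G 3 C D) (hcross : ¬ Nested A B C D)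
    (h₁ : (cornerSep G A B C D).ncard = 3) (h₂ : (cornerSep G B A D C).ncard = 3) :
    (link G C D A B).ncard = (link G A B D C).ncard ∧
      (link G C D B A).ncard = (link G A B C D).ncard ∧
      (link G C D A B).ncard + (link G C D B A).ncard ≤ 3 ∧
      ((link G C D A B).ncard = 0 ↔ (link G C D B A).ncard = 0) := by
  obtain ⟨⟨hABu, hAB₁, hAB₂⟩, hABord⟩ := hAB
  obtain ⟨⟨hCDu, -, -⟩, hCDord⟩ := hCD
  obtain ⟨eAB, eCD⟩ := sepSet_eq_links_union_cornerCentre G A B C D hABu hCDu hABord hCDord h₁ h₂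
  have nAB := ncard_links_union_cornerCentre G A B C D hCDu
  have nCD := ncard_links_union_cornerCentre G C D A B hABu
  rw [cornerCentre_comm] at nCD
  rw [sepOrder, eAB] at hABord
  rw [sepOrder, eCD] at hCDord
  have n₁ := ncard_cornerSep G A B C D
  have n₂ := ncard_cornerSep G B A D C
  rw [link_comm_left, link_comm_left G A B, cornerCentre_opposite] at n₂
  have hconn : (cornerCentre G A B C D).ncard ≤ 2 →
      (G.induce (A ∩ B ∩ C ∩ D)ᶜ).Connected := fun ht =>
    h3.2 _ ((ncard_le_ncard_cornerCentre G A B C D).trans_lt (by omega))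
  refine ⟨by omega, by omega, by omega, ⟨fun ha => ?_, fun hb => ?_⟩⟩
  · by_contra hb
    have hLA : link G C D A B = ∅ := (Set.ncard_eq_zero (Set.toFinite _)).mp ha
    have hLD : link G A B D C = ∅ := (Set.ncard_eq_zero (Set.toFinite _)).mp (by omega)
    exact hcross (Or.inl (subset_and_subset_of_sepSet_subset hABu hCDu hAB₂ (hconn (by omega))
      (by rw [eAB, hLD, Set.union_empty]) (by rw [eCD, hLA, Set.empty_union])))
  · by_contra ha
    have hLB : link G C D B A = ∅ := (Set.ncard_eq_zero (Set.toFinite _)).mp hb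
    have hLC : link G A B C D = ∅ := (Set.ncard_eq_zero (Set.toFinite _)).mp (by omega)
    refine hcross (Or.inr (Or.inr (Or.inr (subset_and_subset_of_sepSet_subset
      (Set.union_comm A B ▸ hABu) (Set.union_comm C D ▸ hCDu) hAB₁
      (inter_inter_inter_comm_each A B C D ▸ hconn (by omega)) ?_ ?_))))
    · rw [sepSet_comm, link_comm_left, cornerCentre_opposite, eAB, hLC, Set.empty_union]
    · rw [sepSet_comm, link_comm_left, cornerCentre_opposite, eCD, hLB, Set.union_empty]

end Nesting

lemma eq_and_le_one_or_eq_three_sub {a b : ℕ} (hab : a + b ≤ 3) (h0 : a = 0 ↔ b = 0) :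
    (b = a ∧ a ∈ ({0, 1} : Set ℕ)) ∨ (a ∈ ({1, 2} : Set ℕ) ∧ b = 3 - a) := by
  simp only [Set.mem_insert_iff, Set.mem_singleton_iff]
  omega

variable [Fintype V] [DecidableEq V]

/-- If two mixed 3-separations of a 3-connected graph cross so that
two opposite corner-separators have size three, then either all links have the
same size `ℓ ∈ {0,1}`, or two adjacent links have size `i` and the other two
size `3 - i` for some `i ∈ {1,2}`. -/
theorem stmt5 (G : SimpleGraph V) (h3 : KConnected 3 G) (A B C D : Set V)
    (hAB : MixedKSep G 3 A B) (hCD : MixedKSep G 3 C D)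
    (hcross : ¬ Nested A B C D)
    (hopp : ((cornerSep G A B C D).ncard = 3 ∧ (cornerSep G B A D C).ncard = 3) ∨
      ((cornerSep G A B D C).ncard = 3 ∧ (cornerSep G B A C D).ncard = 3)) :
    (∃ ℓ ∈ ({0, 1} : Set ℕ),
        (link G C D A B).ncard = ℓ ∧ (link G C D B A).ncard = ℓ ∧
        (link G A B C D).ncard = ℓ ∧ (link G A B D C).ncard = ℓ) ∨
      (∃ i ∈ ({1, 2} : Set ℕ),
        (((link G C D A B).ncard = i ∧ (link G A B C D).ncard = i ∧
            (link G C D B A).ncard = 3 - i ∧ (link G A B D C).ncard = 3 - i) ∨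
          ((link G C D A B).ncard = i ∧ (link G A B D C).ncard = i ∧
            (link G C D B A).ncard = 3 - i ∧ (link G A B C D).ncard = 3 - i))) := by
  rcases hopp with ⟨h₁, h₂⟩ | ⟨h₁, h₂⟩
  · obtain ⟨had, hbc, hab, h0⟩ :=
      link_ncard_of_cornerSep_ncard_eq_three h3 hAB hCD hcross h₁ h₂
    rcases eq_and_le_one_or_eq_three_sub hab h0 with ⟨hba, hℓ⟩ | ⟨hi, hb⟩
    · exact Or.inl ⟨_, hℓ, rfl, hba, by omega, had.symm⟩
    · exact Or.inr ⟨_, hi, Or.inr ⟨rfl, had.symm, hb, by omega⟩⟩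
  · obtain ⟨hac, hbd, hab, h0⟩ := link_ncard_of_cornerSep_ncard_eq_three h3 hAB
      (mixedKSep_comm hCD) (nested_comm_right.not.mpr hcross) h₁ h₂
    simp only [link_comm_left G C D] at hac hbd hab h0
    rcases eq_and_le_one_or_eq_three_sub hab h0 with ⟨hba, hℓ⟩ | ⟨hi, hb⟩
    · exact Or.inl ⟨_, hℓ, rfl, hba, hac.symm, by omega⟩
    · exact Or.inr ⟨_, hi, Or.inl ⟨rfl, hac.symm, hb, by omega⟩⟩

end Paper
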